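/- arXiv:2510.18979 — 2 statements merged into one kernel-verified Lean document; each statement's English description precedes it below -/
import Mathlib

section
/- If B is a Young function with ∫^∞ (t/B(t))^{1/(n-1)} dt = ∞ (the integral near infinity diverges), then the lower Matuszewska–Orlicz index of B at infinity satisfies i_∞(B) ≤ n. -/
open MeasureTheory Set Filter

/-- If `B` is a Young function whose integral `∫^∞ (t/B t)^{1/(n-1)} dt` diverges,
then the lower Matuszewska–Orlicz index of `B` at infinity satisfies `i_∞(B) ≤ n`. -/
theorem lower_index_le_of_divergent_integral
    (n : ℕ) (hn : 2 ≤ n)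
    (B : ℝ → ℝ) (iB : ℝ)
    (hB_conv : ConvexOn ℝ (Set.Ici 0) B)
    (hB_zero : B 0 = 0)
    (hB_pos : ∀ t, 0 < t → 0 < B t)
    (hB_meas : Measurable B)
    (h_div : ¬ IntegrableOn (fun t : ℝ => (t / B t) ^ ((1:ℝ) / ((n:ℝ) - 1)))
      (Set.Ici (1:ℝ)) volume)
    (h_index : Tendsto
      (fun lam : ℝ =>
        Real.log (Filter.liminf (fun t : ℝ => B (lam * t) / B t) Filter.atTop) /
          Real.log lam)
      Filter.atTop (nhds iB)) :
    iB ≤ n := by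
  by_contra hcon
  push_neg at hcon
  have hn1 : (1:ℝ) ≤ (n:ℝ) - 1 := by
    have : (2:ℝ) ≤ (n:ℝ) := by exact_mod_cast hn
    linarith
  -- monotonicity of B on [0, ∞)
  have hmono : ∀ s t : ℝ, 0 ≤ s → s ≤ t → B s ≤ B t := by
    intro s t hs hst
    rcases eq_or_lt_of_le (hs.trans hst) with ht | ht
    · have hs0 : s = 0 := le_antisymm (hst.trans ht.symm.le) hs
      rw [hs0, ← ht]
    · have hBt : 0 ≤ B t := (hB_pos t ht).le
      have ha : (0:ℝ) ≤ s / t := div_nonneg hs ht.le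
      have ha1 : s / t ≤ 1 := div_le_one_of_le₀ hst ht.le
      have key := hB_conv.2 (mem_Ici.mpr ht.le) (mem_Ici.mpr le_rfl) ha
        (by linarith : (0:ℝ) ≤ 1 - s / t) (by ring)
      simp only [smul_eq_mul, mul_zero, hB_zero, add_zero] at key
      rw [div_mul_cancel₀ _ (ne_of_gt ht)] at key
      calc B s ≤ s / t * B t := key
        _ ≤ 1 * B t := by nlinarith
        _ = B t := one_mul _
  set p : ℝ := ((n:ℝ) + iB) / 2 with hp_def
  have hnp : (n:ℝ) < p := by simp only [hp_def]; linarith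
  have hp1 : (1:ℝ) < p := by
    have : (2:ℝ) ≤ (n:ℝ) := by exact_mod_cast hn
    linarith
  have hpi : p < iB := by simp only [hp_def]; linarith
  -- pick lam > 1 with log(liminf)/log lam > p
  obtain ⟨lam, hgt, hlam1⟩ :=
    ((h_index.eventually (eventually_gt_nhds hpi)).and (eventually_gt_atTop 1)).exists
  have hlam0 : (0:ℝ) < lam := lt_trans one_pos hlam1
  have hlog : 0 < Real.log lam := Real.log_pos hlam1
  set L : ℝ := Filter.liminf (fun t : ℝ => B (lam * t) / B t) Filter.atTop with hL_def
  have hlogL : p * Real.log lam < Real.log L := (lt_div_iff₀ hlog).mp hgt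
  have hplog : 0 < p * Real.log lam := mul_pos (by linarith) hlog
  have hL0 : 0 ≤ L := by
    rw [hL_def, Filter.liminf_eq]
    refine Real.sSup_nonneg' ⟨0, ?_, le_rfl⟩
    filter_upwards [eventually_gt_atTop (0:ℝ)] with t ht
    exact div_nonneg (hB_pos _ (mul_pos hlam0 ht)).le (hB_pos _ ht).le
  have hLpos : 0 < L := by
    rcases hL0.lt_or_eq with h | h
    · exact h
    · rw [← h, Real.log_zero] at hlogL
      linarith
  have hL : lam ^ p < L := by
    have h1 : Real.log (lam ^ p) < Real.log L := by
      rwa [Real.log_rpow hlam0]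
    exact (Real.log_lt_log_iff (Real.rpow_pos_of_pos hlam0 p) hLpos).mp h1
  have hbdd : Filter.IsBoundedUnder (· ≥ ·) Filter.atTop
      (fun t : ℝ => B (lam * t) / B t) := by
    refine ⟨0, ?_⟩
    rw [eventually_map]
    filter_upwards [eventually_gt_atTop (0:ℝ)] with t ht
    exact div_nonneg (hB_pos _ (mul_pos hlam0 ht)).le (hB_pos _ ht).le
  have hev : ∀ᶠ t in atTop, lam ^ p < B (lam * t) / B t :=
    eventually_lt_of_lt_liminf hL hbdd
  obtain ⟨T₀, hT₀⟩ := eventually_atTop.mp hev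
  set T : ℝ := max T₀ 1 with hT_def
  have hT1 : (1:ℝ) ≤ T := le_max_right _ _
  have hT0 : (0:ℝ) < T := lt_of_lt_of_le one_pos hT1
  have hstep : ∀ t : ℝ, T ≤ t → lam ^ p * B t ≤ B (lam * t) := by
    intro t ht
    have h1 := hT₀ t ((le_max_left _ _).trans ht)
    have hBt : 0 < B t := hB_pos t (lt_of_lt_of_le (lt_of_lt_of_le one_pos hT1) ht)
    exact ((lt_div_iff₀ hBt).mp h1).le
  -- iterate
  have hiter : ∀ k : ℕ, ∀ t : ℝ, T * lam ^ k ≤ t → (lam ^ p) ^ k * B T ≤ B t := by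
    intro k
    induction k with
    | zero => intro t ht; simpa using hmono T t hT0.le (by simpa using ht)
    | succ k ih =>
      intro t ht
      have hlamk : (1:ℝ) ≤ lam ^ k := one_le_pow₀ hlam1.le
      have hts : T * lam ^ k ≤ t / lam := by
        rw [le_div_iff₀ hlam0]
        calc T * lam ^ k * lam = T * lam ^ (k + 1) := by ring
          _ ≤ t := ht
      have hsT : T ≤ t / lam := le_trans (by nlinarith) hts
      have h1 := ih (t / lam) hts
      have h2 := hstep (t / lam) hsT
      rw [mul_div_cancel₀ _ (ne_of_gt hlam0)] at h2
      have hlp : (0:ℝ) ≤ lam ^ p := (Real.rpow_pos_of_pos hlam0 p).le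
      calc (lam ^ p) ^ (k + 1) * B T = lam ^ p * ((lam ^ p) ^ k * B T) := by ring
        _ ≤ lam ^ p * B (t / lam) := by nlinarith
        _ ≤ B t := h2
  set c : ℝ := B T / (T * lam) ^ p with hc_def
  have hBT : 0 < B T := hB_pos T hT0
  have hc0 : 0 < c := div_pos hBT (Real.rpow_pos_of_pos (mul_pos hT0 hlam0) p)
  -- growth estimate
  have hgrow : ∀ t : ℝ, T ≤ t → c * t ^ p ≤ B t := by
    intro t ht
    have ht0 : 0 < t := lt_of_lt_of_le hT0 ht
    have htT : 1 ≤ t / T := (one_le_div hT0).mpr ht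
    set k : ℕ := ⌊Real.logb lam (t / T)⌋₊ with hk_def
    have hlogb0 : 0 ≤ Real.logb lam (t / T) := Real.logb_nonneg hlam1 htT
    have h1 : (lam:ℝ) ^ k ≤ t / T := by
      have := Real.rpow_le_rpow_left_iff (x := lam) hlam1 (y := (k:ℝ))
        (z := Real.logb lam (t / T))
      rw [← Real.rpow_natCast lam k, ← Real.rpow_logb (by positivity)
        (ne_of_gt hlam1) (by positivity : (0:ℝ) < t / T)]
      exact (Real.rpow_le_rpow_left_iff hlam1).mpr (Nat.floor_le hlogb0)
    have h2 : t / T < lam ^ (k + 1) := by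
      rw [← Real.rpow_natCast lam (k + 1), ← Real.rpow_logb (by positivity)
        (ne_of_gt hlam1) (by positivity : (0:ℝ) < t / T)]
      refine (Real.rpow_lt_rpow_left_iff hlam1).mpr ?_
      push_cast
      exact Nat.lt_floor_add_one _
    have hmain := hiter k t (by rw [← le_div_iff₀' hT0]; exact h1)
    have h3 : (t / (T * lam)) ^ p ≤ (lam ^ p) ^ k := by
      have h4 : t / (T * lam) ≤ lam ^ k := by
        rw [div_le_iff₀ (by positivity)]
        rw [div_lt_iff₀ hT0] at h2
        have h2' : t < lam ^ k * (T * lam) := by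
          calc t < lam ^ (k+1) * T := h2
            _ = lam ^ k * (T * lam) := by ring
        exact h2'.le
      have h5 : (t / (T * lam)) ^ p ≤ ((lam:ℝ) ^ k) ^ p :=
        Real.rpow_le_rpow (by positivity) h4 (by linarith)
      calc (t / (T * lam)) ^ p ≤ ((lam:ℝ) ^ k) ^ p := h5
        _ = (lam ^ p) ^ k := by
            rw [← Real.rpow_natCast lam k, ← Real.rpow_natCast (lam ^ p) k,
              ← Real.rpow_mul hlam0.le, ← Real.rpow_mul hlam0.le, mul_comm]
    have : (t / (T * lam)) ^ p * B T ≤ B t := le_trans (by nlinarith) hmain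
    calc c * t ^ p = (t / (T * lam)) ^ p * B T := by
          rw [hc_def, Real.div_rpow ht0.le (by positivity)]
          field_simp
      _ ≤ B t := this
  -- now integrability, contradiction
  set e : ℝ := (1:ℝ) / ((n:ℝ) - 1) with he_def
  have he0 : 0 < e := by positivity
  have hg_meas : Measurable (fun t : ℝ => (t / B t) ^ e) :=
    (Real.continuous_rpow_const he0.le).measurable.comp (measurable_id.div hB_meas)
  have hint : IntegrableOn (fun t : ℝ => (t / B t) ^ e) (Set.Ici (1:ℝ)) volume := by
    rw [← Icc_union_Ioi_eq_Ici hT1]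
    refine IntegrableOn.union ?_ ?_
    · -- bounded on [1, T]
      refine Measure.integrableOn_of_bounded (M := (T / B 1) ^ e)
        (by simp) hg_meas.aestronglyMeasurable ?_
      refine (ae_restrict_iff' measurableSet_Icc).mpr (ae_of_all _ ?_)
      intro t ht
      have ht1 : 1 ≤ t := ht.1
      have htT : t ≤ T := ht.2
      have hB1 : 0 < B 1 := hB_pos 1 one_pos
      have hBt : 0 < B t := hB_pos t (lt_of_lt_of_le one_pos ht1)
      have h1 : t / B t ≤ T / B 1 :=
        div_le_div₀ hT0.le htT hB1 (hmono 1 t zero_le_one ht1)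
      have h2 : (t / B t) ^ e ≤ (T / B 1) ^ e :=
        Real.rpow_le_rpow (by positivity) h1 he0.le
      rw [Real.norm_eq_abs, abs_of_nonneg (Real.rpow_nonneg (by positivity) e)]
      exact h2
    · -- comparison on (T, ∞)
      have hr : (1 - p) * e < -1 := by
        rw [he_def]
        rw [mul_one_div, div_lt_iff₀ (by linarith : (0:ℝ) < (n:ℝ) - 1)]
        linarith
      have hmaj : IntegrableOn (fun t : ℝ => (1 / c) ^ e * t ^ ((1 - p) * e))
          (Ioi T) volume :=
        (integrableOn_Ioi_rpow_of_lt hr hT0).const_mul _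
      refine Integrable.mono' hmaj hg_meas.aestronglyMeasurable ?_
      refine (ae_restrict_iff' measurableSet_Ioi).mpr (ae_of_all _ ?_)
      intro t ht
      have htT : T ≤ t := (mem_Ioi.mp ht).le
      have ht0 : 0 < t := lt_of_lt_of_le hT0 htT
      have hBt : 0 < B t := hB_pos t ht0
      have hct : 0 < c * t ^ p := by positivity
      have h1 : t / B t ≤ t / (c * t ^ p) :=
        div_le_div_of_nonneg_left ht0.le hct (hgrow t htT)
      have h2 : t / (c * t ^ p) = (1 / c) * t ^ (1 - p) := by
        rw [Real.rpow_sub ht0, Real.rpow_one]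
        field_simp
      have h3 : (t / B t) ^ e ≤ ((1 / c) * t ^ (1 - p)) ^ e := by
        rw [← h2]
        exact Real.rpow_le_rpow (by positivity) h1 he0.le
      have h4 : ((1 / c) * t ^ (1 - p)) ^ e
          = (1 / c) ^ e * t ^ ((1 - p) * e) := by
        rw [Real.mul_rpow (by positivity) (by positivity),
          ← Real.rpow_mul ht0.le]
      rw [Real.norm_eq_abs, abs_of_nonneg (Real.rpow_nonneg (by positivity) e)]
      calc (t / B t) ^ e ≤ (1 / c) ^ e * t ^ ((1 - p) * e) := by rw [← h4]; exact h3
        _ = (1 / c) ^ e * t ^ ((1 - p) * e) := rfl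
  exact h_div hint
end

section
/- Let A be a Young function with i_∞(A) its lower Matuszewska–Orlicz index at infinity. For every ε > 0, A dominates t^{i_∞(A)−ε} near infinity; that is, there exist C > 0 and t₀ ≥ 0 such that t^{i_∞(A)−ε} ≤ A(Ct) for all t ≥ t₀ (assuming i_∞(A) − ε ≥ 1). -/
open Set Filter

/-- For every `ε > 0` with `i_∞(A) - ε ≥ 1`, the Young function `A` dominates
the power `t ^ (i_∞(A) - ε)` near infinity. -/
theorem young_dominates_power_below_lower_index
    (A : ℝ → ℝ) (iA ε : ℝ)
    (hA_conv : ConvexOn ℝ (Set.Ici 0) A)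
    (hA_zero : A 0 = 0)
    (hA_pos : ∀ t, 0 < t → 0 < A t)
    (h_index : Tendsto
      (fun lam : ℝ =>
        Real.log (Filter.liminf (fun t : ℝ => A (lam * t) / A t) Filter.atTop) /
          Real.log lam)
      Filter.atTop (nhds iA))
    (hε : 0 < ε) (h_ge_one : 1 ≤ iA - ε) :
    ∃ C > (0:ℝ), ∃ t₀ ≥ (0:ℝ), ∀ t ≥ t₀, t ^ (iA - ε) ≤ A (C * t) := by
  set p := iA - ε with hpdef
  have hp1 : 1 ≤ p := h_ge_one
  have hp0 : (0:ℝ) < p := lt_of_lt_of_le one_pos hp1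
  have hpiA : p < iA := by simp only [hpdef]; linarith
  -- nonnegativity and monotonicity of A on [0,∞)
  have hA_nonneg : ∀ t : ℝ, 0 ≤ t → 0 ≤ A t := by
    intro t ht
    rcases ht.lt_or_eq with h | h
    · exact (hA_pos t h).le
    · rw [← h, hA_zero]
  have hmono : ∀ s t : ℝ, 0 ≤ s → s ≤ t → A s ≤ A t := by
    intro s t hs hst
    rcases (hs.trans hst).lt_or_eq with ht | ht
    · have hb0 : 0 ≤ s / t := div_nonneg hs ht.le
      have hb1 : s / t ≤ 1 := div_le_one_of_le₀ hst ht.le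
      have key := hA_conv.2 (Set.self_mem_Ici (a := (0:ℝ)))
        (Set.mem_Ici.mpr ht.le) (by linarith : (0:ℝ) ≤ 1 - s / t) hb0 (by ring)
      simp only [smul_eq_mul, mul_zero, zero_add, hA_zero, mul_zero] at key
      have hst' : (s / t) * t = s := div_mul_cancel₀ s (ne_of_gt ht)
      rw [hst'] at key
      calc A s ≤ (1 - s / t) * 0 + s / t * A t := by
                  simpa using key
        _ = (s / t) * A t := by ring
        _ ≤ 1 * A t := by
              exact mul_le_mul_of_nonneg_right hb1 (hA_nonneg t ht.le)
        _ = A t := one_mul _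
    · have : s = 0 := le_antisymm (hst.trans ht.symm.le) hs
      rw [this, hA_zero, ← ht, hA_zero]
  -- pick lam ≥ 2 with p < log(liminf)/log lam
  obtain ⟨lam, hlam2, hlamlog⟩ :
      ∃ lam : ℝ, 2 ≤ lam ∧ p < Real.log
        (Filter.liminf (fun t : ℝ => A (lam * t) / A t) Filter.atTop) / Real.log lam := by
    have h1 := h_index.eventually (eventually_gt_nhds hpiA)
    obtain ⟨lam, h2, h3⟩ := (((eventually_ge_atTop (2:ℝ))).and h1).exists
    exact ⟨lam, h2, h3⟩
  have hlam1 : (1:ℝ) < lam := lt_of_lt_of_le one_lt_two hlam2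
  have hlam0 : (0:ℝ) < lam := lt_trans one_pos hlam1
  have hloglam : 0 < Real.log lam := Real.log_pos hlam1
  set L := Filter.liminf (fun t : ℝ => A (lam * t) / A t) Filter.atTop with hLdef
  set S := { a : ℝ | ∀ᶠ t : ℝ in atTop, a ≤ A (lam * t) / A t } with hSdef
  have hLS : L = sSup S := Filter.liminf_eq
  -- L > lam ^ p
  have hpl : p * Real.log lam < Real.log L := (lt_div_iff₀ hloglam).mp hlamlog
  have hlp_pos : (0:ℝ) < lam ^ p := Real.rpow_pos_of_pos hlam0 p
  have hL0 : 0 ≤ L := by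
    rw [hLS]
    by_cases hb : BddAbove S
    · refine le_csSup hb ?_
      simp only [hSdef, Set.mem_setOf_eq]
      filter_upwards [eventually_gt_atTop (0:ℝ)] with t ht
      exact div_nonneg (hA_nonneg _ (by positivity)) (hA_nonneg _ ht.le)
    · rw [Real.sSup_of_not_bddAbove hb]
  have hLlam : lam ^ p < L := by
    by_contra h
    push_neg at h
    rcases hL0.lt_or_eq with hL | hL
    · have := (Real.log_le_log_iff hL hlp_pos).mpr h
      rw [Real.log_rpow hlam0] at this
      linarith
    · rw [← hL, Real.log_zero] at hpl
      nlinarith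
  -- extract T ≥ 1 with lam^p * A t ≤ A (lam * t) for t ≥ T
  have hSne : S.Nonempty := by
    by_contra h
    rw [Set.not_nonempty_iff_eq_empty] at h
    rw [hLS, h, Real.sSup_empty] at hLlam
    linarith
  obtain ⟨a, haS, halam⟩ := exists_lt_of_lt_csSup hSne (hLS ▸ hLlam)
  obtain ⟨T₀, hT₀⟩ := eventually_atTop.mp haS
  set T := max T₀ 1 with hTdef
  have hT1 : (1:ℝ) ≤ T := le_max_right _ _
  have hT0 : (0:ℝ) < T := lt_of_lt_of_le one_pos hT1
  have hstep : ∀ t : ℝ, T ≤ t → lam ^ p * A t ≤ A (lam * t) := by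
    intro t ht
    have ht0 : (0:ℝ) < t := lt_of_lt_of_le hT0 ht
    have h1 : a ≤ A (lam * t) / A t := hT₀ t (le_trans (le_max_left _ _) ht)
    have h2 : lam ^ p ≤ A (lam * t) / A t := le_trans halam.le h1
    exact (le_div_iff₀ (hA_pos t ht0)).mp h2
  -- iterate
  have hiter : ∀ n : ℕ, ∀ t : ℝ, T ≤ t → (lam ^ p) ^ n * A t ≤ A (lam ^ n * t) := by
    intro n
    induction n with
    | zero => intro t ht; simp
    | succ n ih =>
      intro t ht
      have hl1 : (1:ℝ) ≤ lam ^ n := one_le_pow₀ hlam1.le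
      have ht' : T ≤ lam ^ n * t := le_trans ht (le_mul_of_one_le_left
        (le_trans hT0.le ht) hl1)
      calc (lam ^ p) ^ (n + 1) * A t = lam ^ p * ((lam ^ p) ^ n * A t) := by ring
        _ ≤ lam ^ p * A (lam ^ n * t) := by
              exact mul_le_mul_of_nonneg_left (ih t ht) hlp_pos.le
        _ ≤ A (lam * (lam ^ n * t)) := hstep _ ht'
        _ = A (lam ^ (n + 1) * t) := by ring_nf
  -- lower power bound: for t ≥ T, A T * (t / (lam * T)) ^ p ≤ A t
  have hlow : ∀ t : ℝ, T ≤ t → A T * (t / (lam * T)) ^ p ≤ A t := by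
    intro t ht
    have ht0 : (0:ℝ) < t := lt_of_lt_of_le hT0 ht
    have hx1 : (1:ℝ) ≤ t / T := (one_le_div hT0).mpr ht
    obtain ⟨n, hn1, hn2⟩ := exists_nat_pow_near hx1 hlam1
    have hle : lam ^ n * T ≤ t := (le_div_iff₀ hT0).mp hn1
    have hlt : t / (lam * T) < lam ^ n := by
      rw [div_lt_iff₀ (by positivity)]
      calc t < lam ^ (n + 1) * T := (div_lt_iff₀ hT0).mp hn2
        _ = lam ^ n * (lam * T) := by ring
    have h1 : (t / (lam * T)) ^ p ≤ (lam ^ n : ℝ) ^ p :=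
      Real.rpow_le_rpow (by positivity) hlt.le hp0.le
    have h2 : ((lam : ℝ) ^ n) ^ p = (lam ^ p) ^ n := by
      rw [← Real.rpow_natCast (lam ^ p) n, ← Real.rpow_natCast lam n,
        ← Real.rpow_mul hlam0.le, ← Real.rpow_mul hlam0.le, mul_comm]
    calc A T * (t / (lam * T)) ^ p ≤ A T * (lam ^ p) ^ n := by
            rw [← h2]
            exact mul_le_mul_of_nonneg_left h1 (hA_nonneg T hT0.le)
      _ = (lam ^ p) ^ n * A T := by ring
      _ ≤ A (lam ^ n * T) := hiter n T le_rfl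
      _ ≤ A t := hmono _ _ (by positivity) hle
  -- choose C
  set c := A T with hcdef
  have hc0 : 0 < c := hA_pos T hT0
  set D := max 1 c⁻¹ with hDdef
  have hD1 : (1:ℝ) ≤ D := le_max_left _ _
  have hDc : c⁻¹ ≤ D := le_max_right _ _
  refine ⟨lam * T * D, by positivity, T, hT0.le, ?_⟩
  intro t ht
  have ht0 : (0:ℝ) < t := lt_of_lt_of_le hT0 ht
  have hCt : T ≤ lam * T * D * t := by
    have h0 : (1:ℝ) ≤ lam * T := by nlinarith
    have h1 : (1:ℝ) ≤ lam * T * D := by nlinarith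
    exact ht.trans (le_mul_of_one_le_left ht0.le h1)
  have key := hlow (lam * T * D * t) hCt
  have heq : lam * T * D * t / (lam * T) = D * t := by
    field_simp
  rw [heq] at key
  have hDt : (D * t) ^ p = D ^ p * t ^ p :=
    Real.mul_rpow (by positivity) ht0.le
  have hDp : D ≤ D ^ p := by
    calc D = D ^ (1:ℝ) := (Real.rpow_one D).symm
      _ ≤ D ^ p := Real.rpow_le_rpow_of_exponent_le hD1 hp1
  have h1cD : 1 ≤ c * D ^ p := by
    have : c * c⁻¹ ≤ c * D ^ p :=
      mul_le_mul_of_nonneg_left (le_trans hDc hDp) hc0.le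
    rwa [mul_inv_cancel₀ (ne_of_gt hc0)] at this
  calc t ^ p = 1 * t ^ p := (one_mul _).symm
    _ ≤ (c * D ^ p) * t ^ p :=
        mul_le_mul_of_nonneg_right h1cD (Real.rpow_nonneg ht0.le p)
    _ = c * (D * t) ^ p := by rw [hDt]; ring
    _ ≤ A (lam * T * D * t) := key
end
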